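/- If the restricted quantified Boolean formula Q is true, then the ∃-player has a winning strategy in the graph game on (G, C, s, R) constructed from Q. -/

import Mathlib

namespace PhutballQBF

/-- A literal: a variable `xₗ` (`pos l`) or its negation `¬xₗ` (`neg l`). -/
inductive Lit where
  | pos (l : ℕ)
  | neg (l : ℕ)
deriving DecidableEq

/-- The index of the variable occurring in a literal. -/
def Lit.var : Lit → ℕ
  | .pos l => l
  | .neg l => l

/-- Evaluation of a literal under a Boolean assignment. -/
def Lit.eval (σ : ℕ → Bool) : Lit → Bool
  | .pos l => σ l
  | .neg l => !(σ l)

/-- Well-formedness of the 3CNF `F = F₁ ∧ ⋯ ∧ F_m`: the literal `l_{i,j}` (for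
`1 ≤ i ≤ m`, `1 ≤ j ≤ 3`) mentions one of the variables `x₁, …, xₙ`. -/
def LitWF (n m : ℕ) (lit : ℕ → ℕ → Lit) : Prop :=
  ∀ i j, 1 ≤ i → i ≤ m → 1 ≤ j → j ≤ 3 → 1 ≤ (lit i j).var ∧ (lit i j).var ≤ n

/-- The clause `Fᵢ = (l_{i,1} ∨ l_{i,2} ∨ l_{i,3})` evaluates to true under `σ`. -/
def ClauseTrue (lit : ℕ → ℕ → Lit) (i : ℕ) (σ : ℕ → Bool) : Prop :=
  ∃ j, 1 ≤ j ∧ j ≤ 3 ∧ (lit i j).eval σ = true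

/-- The 3CNF formula `F = F₁ ∧ ⋯ ∧ F_m` evaluates to true under `σ`. -/
def FTrue (lit : ℕ → ℕ → Lit) (m : ℕ) (σ : ℕ → Bool) : Prop :=
  ∀ i, 1 ≤ i → i ≤ m → ClauseTrue lit i σ

/-- `QAux P i k σ`: the quantified statement with `k` variables `x_i, …, x_{i+k-1}`
still to be quantified (existentially when the index is odd, universally when even),
the remaining variables having the values recorded in `σ`. -/
def QAux (P : (ℕ → Bool) → Prop) : ℕ → ℕ → (ℕ → Bool) → Prop
  | _, 0, σ => P σ
  | i, k + 1, σ =>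
      if i % 2 = 1 then ∃ b, QAux P (i + 1) k (Function.update σ i b)
      else ∀ b, QAux P (i + 1) k (Function.update σ i b)

/-- Truth of the restricted quantified Boolean formula
`Q = ∃x₁ ∀x₂ ∃x₃ ⋯ ∀xₙ F(x₁, …, xₙ)`. -/
def QTrue (n m : ℕ) (lit : ℕ → ℕ → Lit) : Prop :=
  QAux (FTrue lit m) 1 n (fun _ => false)

/-- The vertices of the graph `G` built from `Q` (with natural-number indices;
`g 0` is the extra vertex `g₀`). -/
inductive Vtx where
  | a (i : ℕ) | b (i : ℕ) | c (i : ℕ) | d (i : ℕ) | e (i : ℕ) | f (i : ℕ) | g (i : ℕ)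
  | x (i : ℕ) | y (i : ℕ) | z (i : ℕ) | w (i : ℕ) (j : ℕ)
deriving DecidableEq

/-- A directed edge. -/
abbrev Edge := Vtx × Vtx

/-- The edge set `E(G)` of the graph `G` constructed from `Q` (with `n` variables and
`m` clauses): the variable components `G(xᵢ)`, the connecting edges `(gᵢ, aᵢ₊₁)` for
`i = 0, …, n-1`, the edge `(gₙ, x₁)`, and the formula component `G(F)`. -/
def EG (n m : ℕ) : Set Edge :=
  { p | (∃ i, 1 ≤ i ∧ i ≤ n ∧
          (p = (Vtx.a i, Vtx.b i) ∨ p = (Vtx.a i, Vtx.c i) ∨ p = (Vtx.b i, Vtx.e i) ∨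
           p = (Vtx.c i, Vtx.f i) ∨ p = (Vtx.e i, Vtx.d i) ∨ p = (Vtx.f i, Vtx.d i) ∨
           p = (Vtx.d i, Vtx.g i))) ∨
        (∃ i, i ≤ n - 1 ∧ p = (Vtx.g i, Vtx.a (i + 1))) ∨
        p = (Vtx.g n, Vtx.x 1) ∨
        (∃ i, 1 ≤ i ∧ i ≤ m ∧
          (p = (Vtx.x i, Vtx.y i) ∨ p = (Vtx.y i, Vtx.z i) ∨ p = (Vtx.z i, Vtx.w i 1) ∨
           p = (Vtx.w i 1, Vtx.w i 2) ∨ p = (Vtx.w i 2, Vtx.w i 3))) ∨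
        (∃ i, 1 ≤ i ∧ i ≤ m - 1 ∧ p = (Vtx.x i, Vtx.x (i + 1))) }

/-- The set `C = {g₀, g₁, …, g_{n-1}} ∪ {z₁, …, z_m}`. -/
def Cset (n m : ℕ) : Set Vtx :=
  { v | (∃ i, i ≤ n - 1 ∧ v = Vtx.g i) ∨ (∃ i, 1 ≤ i ∧ i ≤ m ∧ v = Vtx.z i) }

/-- The relation `R ⊆ V(G) × E(G)`: `(w_{i,j}, (bₗ, eₗ)) ∈ R` iff `l_{i,j} = xₗ`, and
`(w_{i,j}, (cₗ, fₗ)) ∈ R` iff `l_{i,j} = ¬xₗ`. -/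
def Rrel (lit : ℕ → ℕ → Lit) (m : ℕ) : Set (Vtx × Edge) :=
  { p | ∃ i j, 1 ≤ i ∧ i ≤ m ∧ 1 ≤ j ∧ j ≤ 3 ∧
        ((∃ l, lit i j = Lit.pos l ∧ p = (Vtx.w i j, (Vtx.b l, Vtx.e l))) ∨
         (∃ l, lit i j = Lit.neg l ∧ p = (Vtx.w i j, (Vtx.c l, Vtx.f l)))) }

/-- `Rinv R E = R⁻¹(E)`: the vertices pointing some edge of `E`. -/
def Rinv (R : Set (Vtx × Edge)) (E : Set Edge) : Set Vtx :=
  { v | ∃ e ∈ E, (v, e) ∈ R }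

/-- The set of (directed) edges traversed by a path given as its list of vertices. -/
def pathEdges (p : List Vtx) : Set Edge := { e | e ∈ p.zip p.tail }

/-- A legal move of the graph game from active vertex `u ∈ C` with current edge set `E`
along the directed path `p` (a list of at least two pairwise distinct vertices whose
consecutive pairs are edges of `E`), ending at a vertex `v ∈ C ∪ R⁻¹(E)`, with all
internal vertices of `p` outside `C ∪ R⁻¹(E)`; the resulting edge set `E'` is obtained
by deleting the edges of `p` from `E`. -/
def LegalMoveVia (C : Set Vtx) (R : Set (Vtx × Edge))
    (u : Vtx) (E : Set Edge) (v : Vtx) (E' : Set Edge) (p : List Vtx) : Prop :=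
  u ∈ C ∧ v ∈ C ∪ Rinv R E ∧
  2 ≤ p.length ∧ p.Nodup ∧
  p.head? = some u ∧ p.getLast? = some v ∧
  List.Chain' (fun a b => (a, b) ∈ E) p ∧
  (∀ w ∈ (p.drop 1).dropLast, w ∉ C ∪ Rinv R E) ∧
  E' = E \ pathEdges p

/-- A legal move from `(u, E)` to `(v, E')` (along some path). -/
def LegalMove (C : Set Vtx) (R : Set (Vtx × Edge))
    (u : Vtx) (E : Set Edge) (v : Vtx) (E' : Set Edge) : Prop :=
  ∃ p, LegalMoveVia C R u E v E' p

/-- `MoverWins C R true u E` says that the player to move at the position with active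
vertex `u` and current edge set `E` has a winning strategy; `MoverWins C R false u E`
says that the player to move loses whatever he does (in particular, if he has no legal
move he loses immediately; a move to a vertex of `R⁻¹(E)` wins the game for the mover). -/
inductive MoverWins (C : Set Vtx) (R : Set (Vtx × Edge)) : Bool → Vtx → Set Edge → Prop
  | winsNow {u E v E'} : LegalMove C R u E v E' → v ∈ Rinv R E →
      MoverWins C R true u E
  | winsLater {u E v E'} : LegalMove C R u E v E' → MoverWins C R false v E' →
      MoverWins C R true u E
  | loses {u E} :
      (∀ v E', LegalMove C R u E v E' → v ∉ Rinv R E) →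
      (∀ v E', LegalMove C R u E v E' → MoverWins C R true v E') →
      MoverWins C R false u E

/-- The two players of the graph game. -/
inductive Player where
  | ex | fa
deriving DecidableEq

/-- The opponent of a player. -/
def Player.other : Player → Player
  | .ex => .fa
  | .fa => .ex

/-- A (maximal) play of the graph game on `(G, C, s, R)` starting from active vertex `s`
and edge set `E0`, with the ∃-player moving first.  `act k` and `edg k` are the active
vertex and edge set after `k` moves, `turn k` is the player who makes the `(k+1)`-st
move, and `len` is the total number of moves.  The play stops either because its last
move reached a vertex of `R⁻¹(E)` (the mover wins) or because the player to move has no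
legal move (he loses); before that, no move may end in `R⁻¹(E)` without stopping. -/
structure Play (C : Set Vtx) (R : Set (Vtx × Edge)) (s : Vtx) (E0 : Set Edge) where
  len : ℕ
  act : ℕ → Vtx
  edg : ℕ → Set Edge
  turn : ℕ → Player
  init_act : act 0 = s
  init_edg : edg 0 = E0
  init_turn : turn 0 = Player.ex
  turn_alt : ∀ k, turn (k + 1) = (turn k).other
  step : ∀ k, k < len → LegalMove C R (act k) (edg k) (act (k + 1)) (edg (k + 1))
  not_over : ∀ k, k + 1 < len → act (k + 1) ∉ Rinv R (edg k)
  maximal : (0 < len ∧ act len ∈ Rinv R (edg (len - 1))) ∨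
            (∀ v E', ¬ LegalMove C R (act len) (edg len) v E')

/-! The ∃-player plays the winning strategy of `Q`. Between `g_{k-1}` and `g_k` the only
vertices that can end a move are `g`-vertices, so each move walks through one variable
gadget: taking the `c`-side (`x_k := true`) deletes `(c_k, f_k)`, taking the `b`-side
deletes `(b_k, e_k)`. Since `g_n ∉ C`, the last move (made by the ∀-player, `n` being even)
continues through `x₁, …, x_i, y_i` to a clause vertex `z_i`. Afterwards `(b_l, e_l)`
survives iff `x_l` is true and `(c_l, f_l)` iff `x_l` is false, so `w_{i,j} ∈ R⁻¹(E)`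
exactly when the literal `l_{i,j}` is true, and the ∃-player walks from `z_i` to the first
true literal of the clause `F_i`. -/

@[simp] lemma pathEdges_nil : pathEdges [] = ∅ := by
  ext; simp [pathEdges]

@[simp] lemma pathEdges_singleton (a : Vtx) : pathEdges [a] = ∅ := by
  ext; simp [pathEdges]

@[simp] lemma pathEdges_cons_cons (a b : Vtx) (l : List Vtx) :
    pathEdges (a :: b :: l) = insert (a, b) (pathEdges (b :: l)) := by
  ext; simp [pathEdges]

lemma snd_mem_of_mem_pathEdges {l : List Vtx} {e : Edge} (h : e ∈ pathEdges l) : e.2 ∈ l :=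
  List.mem_of_mem_tail (List.of_mem_zip h).2

lemma pathEdges_subset_append (l₁ l₂ : List Vtx) : pathEdges l₁ ⊆ pathEdges (l₁ ++ l₂) := by
  induction l₁ with
  | nil => simp
  | cons a l ih =>
    cases l with
    | nil => simp
    | cons b r => simpa using Set.insert_subset_insert ih

lemma mem_pathEdges_append {l₁ l₂ : List Vtx} {e : Edge} (h : e ∈ pathEdges (l₁ ++ l₂)) :
    e ∈ pathEdges l₁ ∨ e.2 ∈ l₂ := by
  induction l₁ with
  | nil => exact .inr (snd_mem_of_mem_pathEdges h)
  | cons a l ih =>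
    cases l with
    | nil =>
      cases l₂ with
      | nil => simp at h
      | cons b r =>
        right
        rcases (by simpa using h : e = (a, b) ∨ e ∈ pathEdges (b :: r)) with rfl | h
        exacts [List.mem_cons_self, snd_mem_of_mem_pathEdges h]
    | cons b r =>
      simp only [List.cons_append, pathEdges_cons_cons, Set.mem_insert_iff] at h ⊢
      rcases h with rfl | h
      exacts [.inl (.inl rfl), (ih h).imp_left .inr]

lemma isChain_of_pathEdges_subset {l : List Vtx} {E : Set Edge} (h : pathEdges l ⊆ E) :
    l.IsChain (fun a b => (a, b) ∈ E) := by
  induction l with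
  | nil => simp
  | cons a l ih =>
    cases l with
    | nil => simp
    | cons b r =>
      rw [pathEdges_cons_cons, Set.insert_subset_iff] at h
      exact .cons_cons h.1 (ih h.2)

/-- The part of a move after its first vertex. -/
def AvoidingWalk (S : Set Vtx) (E : Set Edge) (v : Vtx) (q : List Vtx) : Prop :=
  q.IsChain (fun a b => (a, b) ∈ E) ∧ q.getLast? = some v ∧ ∀ u ∈ q.dropLast, u ∉ S

namespace AvoidingWalk

variable {S : Set Vtx} {E : Set Edge} {u v : Vtx} {q : List Vtx}

lemma eq_of_mem (h : AvoidingWalk S E v (u :: q)) (hu : u ∈ S) : q = [] ∧ v = u := by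
  obtain ⟨-, hlast, havoid⟩ := h
  cases q with
  | nil => simpa using hlast.symm
  | cons u' q => exact absurd hu (havoid u (by simp))

lemma step (h : AvoidingWalk S E v (u :: q)) (hv : v ∈ S) (hu : u ∉ S) :
    ∃ u' q', q = u' :: q' ∧ (u, u') ∈ E ∧ AvoidingWalk S E v (u' :: q') := by
  obtain ⟨hchain, hlast, havoid⟩ := h
  cases q with
  | nil =>
    obtain rfl : u = v := by simpa using hlast
    exact absurd hv hu
  | cons u' q =>
    replace hchain := List.isChain_cons_cons.1 hchain
    refine ⟨u', q, rfl, hchain.1, hchain.2, by simpa using hlast, fun w hw => havoid w ?_⟩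
    simp [hw]

end AvoidingWalk

lemma LegalMoveVia.exists_avoidingWalk {C : Set Vtx} {R : Set (Vtx × Edge)} {u v : Vtx}
    {E E' : Set Edge} {p : List Vtx} (h : LegalMoveVia C R u E v E' p) :
    ∃ u' q, p = u :: u' :: q ∧ (u, u') ∈ E ∧ AvoidingWalk (C ∪ Rinv R E) E v (u' :: q) ∧
      v ∈ C ∪ Rinv R E ∧ E' = E \ pathEdges p := by
  obtain ⟨-, hv, hlen, -, hhead, hlast, hchain, havoid, hE'⟩ := h
  match p, hhead, hlen with
  | _ :: u' :: q, rfl, _ =>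
    replace hchain := List.isChain_cons_cons.1 hchain
    exact ⟨u', q, rfl, hchain.1, ⟨hchain.2, by simpa using hlast, by simpa using havoid⟩,
      hv, hE'⟩

def EGAdj (n m : ℕ) : Vtx → Vtx → Prop
  | .g k, v => (k ≤ n - 1 ∧ v = .a (k + 1)) ∨ (k = n ∧ v = .x 1)
  | .a l, v => 1 ≤ l ∧ l ≤ n ∧ (v = .b l ∨ v = .c l)
  | .b l, v => 1 ≤ l ∧ l ≤ n ∧ v = .e l
  | .c l, v => 1 ≤ l ∧ l ≤ n ∧ v = .f l
  | .e l, v => 1 ≤ l ∧ l ≤ n ∧ v = .d l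
  | .f l, v => 1 ≤ l ∧ l ≤ n ∧ v = .d l
  | .d l, v => 1 ≤ l ∧ l ≤ n ∧ v = .g l
  | .x i, v => 1 ≤ i ∧ ((i ≤ m ∧ v = .y i) ∨ (i ≤ m - 1 ∧ v = .x (i + 1)))
  | .y i, v => 1 ≤ i ∧ i ≤ m ∧ v = .z i
  | .z i, v => 1 ≤ i ∧ i ≤ m ∧ v = .w i 1
  | .w i j, v => 1 ≤ i ∧ i ≤ m ∧ ((j = 1 ∧ v = .w i 2) ∨ (j = 2 ∧ v = .w i 3))

section Graph

variable {n m : ℕ} {lit : ℕ → ℕ → Lit}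

lemma mem_EG_iff {u v : Vtx} : (u, v) ∈ EG n m ↔ EGAdj n m u v := by
  cases u <;> simp [EG, EGAdj] <;> grind

/-- On the other constructors `IsGZW` reduces to `False`, so `isGZW_of_mem` itself proves
`v ∉ C ∪ R⁻¹(E)` for them. -/
def Vtx.IsGZW : Vtx → Prop
  | .g _ | .z _ | .w _ _ => True
  | _ => False

lemma exists_eq_w_of_mem_Rinv {E : Set Edge} {v : Vtx} (h : v ∈ Rinv (Rrel lit m) E) :
    ∃ i j, v = .w i j := by
  obtain ⟨e, -, i, j, -, -, -, -, ⟨l, -, he⟩ | ⟨l, -, he⟩⟩ := h <;>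
    exact ⟨i, j, (Prod.ext_iff.1 he).1⟩

lemma isGZW_of_mem {E : Set Edge} {v : Vtx} (h : v ∈ Cset n m ∪ Rinv (Rrel lit m) E) :
    v.IsGZW := by
  rcases h with (⟨i, -, rfl⟩ | ⟨i, -, -, rfl⟩) | h
  · trivial
  · trivial
  · obtain ⟨i, j, rfl⟩ := exists_eq_w_of_mem_Rinv h
    trivial

lemma g_mem_Cset {k : ℕ} (hk : k ≤ n - 1) : Vtx.g k ∈ Cset n m := .inl ⟨k, hk, rfl⟩

lemma z_mem_Cset {i : ℕ} (h1 : 1 ≤ i) (h2 : i ≤ m) : Vtx.z i ∈ Cset n m :=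
  .inr ⟨i, h1, h2, rfl⟩

lemma w_not_mem_Cset (i j : ℕ) : Vtx.w i j ∉ Cset n m := by
  rintro (⟨_, -, h⟩ | ⟨_, -, -, h⟩) <;> cases h

lemma g_not_mem_of_lt {E : Set Edge} {k : ℕ} (hk : n - 1 < k) :
    Vtx.g k ∉ Cset n m ∪ Rinv (Rrel lit m) E := by
  rintro ((⟨i, hi, h⟩ | ⟨_, -, -, h⟩) | h)
  · cases h; omega
  · cases h
  · obtain ⟨_, _, h⟩ := exists_eq_w_of_mem_Rinv h
    cases h

def Lit.edge : Lit → Edge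
  | .pos l => (.b l, .e l)
  | .neg l => (.c l, .f l)

lemma w_mem_Rinv_iff {E : Set Edge} {i j : ℕ} (hi1 : 1 ≤ i) (hi2 : i ≤ m) (hj1 : 1 ≤ j)
    (hj2 : j ≤ 3) : Vtx.w i j ∈ Rinv (Rrel lit m) E ↔ (lit i j).edge ∈ E := by
  constructor
  · rintro ⟨e, he, i', j', -, -, -, -, ⟨l, hl, hp⟩ | ⟨l, hl, hp⟩⟩ <;>
    · obtain ⟨⟨rfl, rfl⟩, rfl⟩ := by simpa using hp
      simpa [Lit.edge, hl] using he
  · intro h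
    cases hl : lit i j with
    | pos l =>
      exact ⟨_, by simpa [Lit.edge, hl] using h, i, j, hi1, hi2, hj1, hj2, .inl ⟨l, hl, rfl⟩⟩
    | neg l =>
      exact ⟨_, by simpa [Lit.edge, hl] using h, i, j, hi1, hi2, hj1, hj2, .inr ⟨l, hl, rfl⟩⟩

end Graph

/-- Taking the `c`-side deletes the edge `(c_l, f_l)` of the literal `¬x_l`, so it encodes
`x_l := true`. -/
def gpath (l : ℕ) (b : Bool) : List Vtx :=
  [.g (l - 1), .a l, if b then .c l else .b l, if b then .f l else .e l, .d l, .g l]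

def xpath : ℕ → ℕ → List Vtx
  | 0, i => [.x i, .y i, .z i]
  | d + 1, i => .x i :: xpath d (i + 1)

/-- The edges deleted by the first `k` moves when they set `x_l := σ l`. -/
def usedEdges (σ : ℕ → Bool) (k : ℕ) : Set Edge :=
  { e | ∃ l, 1 ≤ l ∧ l ≤ k ∧ e ∈ pathEdges (gpath l (σ l)) }

section Strategy

variable {n m : ℕ} {lit : ℕ → ℕ → Lit}

lemma not_mem_xpath {v : Vtx} (hv : ∀ j, v ≠ .x j ∧ v ≠ .y j ∧ v ≠ .z j) (d i : ℕ) :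
    v ∉ xpath d i := by
  induction d generalizing i with
  | zero => simp [xpath, hv]
  | succ d ih => simp [xpath, (hv i).1, ih]

lemma usedEdges_zero (σ : ℕ → Bool) : usedEdges σ 0 = ∅ := by
  ext e; simp [usedEdges]

lemma usedEdges_succ (σ : ℕ → Bool) (k : ℕ) (b : Bool) :
    usedEdges (Function.update σ (k + 1) b) (k + 1) =
      usedEdges σ k ∪ pathEdges (gpath (k + 1) b) := by
  ext e
  simp only [usedEdges, Set.mem_ofPred_eq, Set.mem_union]
  constructor
  · rintro ⟨l, h1, h2, he⟩
    rcases Nat.eq_or_lt_of_le h2 with rfl | hlt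
    · exact .inr (by rwa [Function.update_self] at he)
    · exact .inl ⟨l, h1, by omega, by rwa [Function.update_of_ne (by omega)] at he⟩
  · rintro (⟨l, h1, h2, he⟩ | he)
    · exact ⟨l, h1, by omega, by rwa [Function.update_of_ne (by omega)]⟩
    · exact ⟨k + 1, by omega, le_rfl, by rwa [Function.update_self]⟩

lemma sdiff_usedEdges_sdiff_gpath (A : Set Edge) (σ : ℕ → Bool) (k : ℕ) (b : Bool) :
    (A \ usedEdges σ k) \ pathEdges (gpath (k + 1) b) =
      A \ usedEdges (Function.update σ (k + 1) b) (k + 1) := by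
  rw [usedEdges_succ, Set.sdiff_sdiff]

lemma Lit.edge_mem_usedEdges_iff {σ : ℕ → Bool} {k : ℕ} {t : Lit} (h1 : 1 ≤ t.var)
    (h2 : t.var ≤ k) : t.edge ∈ usedEdges σ k ↔ t.eval σ = false := by
  have hbe (v l : ℕ) (c : Bool) :
      (Vtx.b v, Vtx.e v) ∈ pathEdges (gpath l c) ↔ v = l ∧ c = false := by
    cases c <;> simp [gpath]
  have hcf (v l : ℕ) (c : Bool) :
      (Vtx.c v, Vtx.f v) ∈ pathEdges (gpath l c) ↔ v = l ∧ c = true := by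
    cases c <;> simp [gpath]
  cases t with
  | pos v =>
    simp only [usedEdges, Lit.edge, Lit.eval, Set.mem_ofPred_eq, hbe]
    exact ⟨fun ⟨l, _, _, hl, h⟩ => hl ▸ h, fun h => ⟨v, h1, h2, rfl, h⟩⟩
  | neg v =>
    simp only [usedEdges, Lit.edge, Lit.eval, Set.mem_ofPred_eq, hcf, Bool.not_eq_false']
    exact ⟨fun ⟨l, _, _, hl, h⟩ => hl ▸ h, fun h => ⟨v, h1, h2, rfl, h⟩⟩

lemma edge_w_not_mem_usedEdges (σ : ℕ → Bool) (k : ℕ) (u : Vtx) (i j : ℕ) :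
    (u, .w i j) ∉ usedEdges σ k := by
  rintro ⟨l, -, -, he⟩
  have := snd_mem_of_mem_pathEdges he
  generalize σ l = c at this
  cases c <;> simp [gpath] at this

lemma pathEdges_gpath_subset {σ : ℕ → Bool} {l : ℕ} (b : Bool) (h1 : 1 ≤ l) (h2 : l ≤ n) :
    pathEdges (gpath l b) ⊆ EG n m \ usedEdges σ (l - 1) := by
  intro e he
  refine ⟨?_, ?_⟩
  · cases b <;> simp [gpath] at he <;> rcases he with rfl | rfl | rfl | rfl | rfl <;>
      simp [mem_EG_iff, EGAdj] <;> omega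
  · rintro ⟨l', h1', h2', he'⟩
    generalize σ l' = c at he'
    cases b <;> cases c <;> simp [gpath] at he he' <;>
      rcases he with rfl | rfl | rfl | rfl | rfl <;> simp at he' <;> omega

lemma legalMoveVia_gpath (σ : ℕ → Bool) {k : ℕ} (hk : k + 2 ≤ n) (b : Bool) :
    LegalMoveVia (Cset n m) (Rrel lit m) (.g k) (EG n m \ usedEdges σ k) (.g (k + 1))
      (EG n m \ usedEdges (Function.update σ (k + 1) b) (k + 1)) (gpath (k + 1) b) := by
  refine ⟨g_mem_Cset (by omega), .inl (g_mem_Cset (by omega)), by simp [gpath], ?_,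
    by simp [gpath], by simp [gpath],
    isChain_of_pathEdges_subset (pathEdges_gpath_subset b (by omega) (by omega)),
    ?_, (sdiff_usedEdges_sdiff_gpath _ σ k b).symm⟩
  · cases b <;> simp [gpath]
  · intro u hu
    cases b <;> simp [gpath] at hu <;> rcases hu with rfl | rfl | rfl | rfl <;> exact isGZW_of_mem

lemma AvoidingWalk.eq_gadget {E : Set Edge} (hE : E ⊆ EG n m) {v : Vtx}
    (hv : v ∈ Cset n m ∪ Rinv (Rrel lit m) E) {l : ℕ} {q : List Vtx}
    (h : AvoidingWalk (Cset n m ∪ Rinv (Rrel lit m) E) E v (.a l :: q)) :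
    ∃ b q', .a l :: q = (gpath l b).tail ++ q' ∧
      AvoidingWalk (Cset n m ∪ Rinv (Rrel lit m) E) E v (.g l :: q') := by
  obtain ⟨u₁, q₁, rfl, h₁, w₁⟩ := h.step hv isGZW_of_mem
  obtain ⟨-, -, rfl | rfl⟩ := mem_EG_iff.1 (hE h₁)
  all_goals
    obtain ⟨u₂, q₂, rfl, h₂, w₂⟩ := w₁.step hv isGZW_of_mem
    obtain ⟨-, -, rfl⟩ := mem_EG_iff.1 (hE h₂)
    obtain ⟨u₃, q₃, rfl, h₃, w₃⟩ := w₂.step hv isGZW_of_mem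
    obtain ⟨-, -, rfl⟩ := mem_EG_iff.1 (hE h₃)
    obtain ⟨u₄, q₄, rfl, h₄, w₄⟩ := w₃.step hv isGZW_of_mem
    obtain ⟨-, -, rfl⟩ := mem_EG_iff.1 (hE h₄)
  exacts [⟨false, q₄, rfl, w₄⟩, ⟨true, q₄, rfl, w₄⟩]

lemma AvoidingWalk.eq_xpath {E : Set Edge} (hE : E ⊆ EG n m) {v : Vtx}
    (hv : v ∈ Cset n m ∪ Rinv (Rrel lit m) E) {q : List Vtx} :
    ∀ {i}, AvoidingWalk (Cset n m ∪ Rinv (Rrel lit m) E) E v (.x i :: q) →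
      ∃ d, .x i :: q = xpath d i ∧ v = .z (i + d) ∧ 1 ≤ i + d ∧ i + d ≤ m := by
  induction q with
  | nil =>
    intro i h
    obtain rfl : Vtx.x i = v := by simpa using h.2.1
    exact absurd hv isGZW_of_mem
  | cons u q ih =>
    intro i h
    obtain ⟨_, _, ⟨⟩, h₁, w₁⟩ := h.step hv isGZW_of_mem
    obtain ⟨hi, ⟨-, rfl⟩ | ⟨-, rfl⟩⟩ := mem_EG_iff.1 (hE h₁)
    · obtain ⟨u₂, q₂, rfl, h₂, w₂⟩ := w₁.step hv isGZW_of_mem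
      obtain ⟨-, hm, rfl⟩ := mem_EG_iff.1 (hE h₂)
      obtain ⟨rfl, rfl⟩ := w₂.eq_of_mem (.inl (z_mem_Cset hi hm))
      exact ⟨0, rfl, rfl, hi, hm⟩
    · obtain ⟨d, hq, rfl, hd⟩ := ih w₁
      exact ⟨d + 1, by rw [xpath, hq], by congr 1; omega, by omega⟩

lemma eq_gpath_of_legalMoveVia {E E' : Set Edge} (hE : E ⊆ EG n m) {k : ℕ} (hk : k + 2 ≤ n)
    {v : Vtx} {p : List Vtx} (h : LegalMoveVia (Cset n m) (Rrel lit m) (.g k) E v E' p) :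
    ∃ b, p = gpath (k + 1) b ∧ v = .g (k + 1) ∧ E' = E \ pathEdges p := by
  obtain ⟨u, q, rfl, h₀, hwalk, hv, rfl⟩ := h.exists_avoidingWalk
  obtain ⟨-, rfl⟩ | ⟨h, -⟩ := mem_EG_iff.1 (hE h₀)
  · obtain ⟨b, q', hq, hwalk'⟩ := hwalk.eq_gadget hE hv
    obtain ⟨rfl, rfl⟩ := hwalk'.eq_of_mem (.inl (g_mem_Cset (by omega)))
    exact ⟨b, by simp [hq, gpath], rfl, rfl⟩
  · omega

lemma eq_gpath_append_xpath_of_legalMoveVia {E E' : Set Edge} (hE : E ⊆ EG n m) (hn : 2 ≤ n)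
    {v : Vtx} {p : List Vtx} (h : LegalMoveVia (Cset n m) (Rrel lit m) (.g (n - 1)) E v E' p) :
    ∃ b d, p = gpath n b ++ xpath d 1 ∧ v = .z (1 + d) ∧ 1 + d ≤ m ∧ E' = E \ pathEdges p := by
  obtain ⟨u, q, rfl, h₀, hwalk, hv, rfl⟩ := h.exists_avoidingWalk
  obtain ⟨-, rfl⟩ | ⟨h, -⟩ := mem_EG_iff.1 (hE h₀)
  · rw [Nat.sub_add_cancel (by omega)] at hwalk ⊢
    obtain ⟨b, q', hq, hwalk'⟩ := hwalk.eq_gadget hE hv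
    obtain ⟨u', q'', rfl, h₁, hwalk''⟩ := hwalk'.step hv (g_not_mem_of_lt (by omega))
    obtain ⟨h, -⟩ | ⟨-, rfl⟩ := mem_EG_iff.1 (hE h₁)
    · omega
    obtain ⟨d, hx, rfl, -, hd⟩ := hwalk''.eq_xpath hE hv
    exact ⟨b, d, by simp [hq, hx, gpath], rfl, hd, rfl⟩
  · omega

lemma Lit.edge_mem_EG {t : Lit} (h1 : 1 ≤ t.var) (h2 : t.var ≤ n) : t.edge ∈ EG n m := by
  cases t <;> exact mem_EG_iff.2 ⟨h1, h2, rfl⟩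

lemma Lit.edge_snd_not_mem_xpath (t : Lit) (d i : ℕ) : t.edge.2 ∉ xpath d i := by
  cases t <;> exact not_mem_xpath (by simp [Lit.edge]) d i

lemma moverWins_z_of_exists_w {C : Set Vtx} {R : Set (Vtx × Edge)} {E : Set Edge} {i : ℕ}
    (hz : Vtx.z i ∈ C) (hw : ∀ j, Vtx.w i j ∉ C) (h₁ : (Vtx.z i, Vtx.w i 1) ∈ E)
    (h₂ : (Vtx.w i 1, Vtx.w i 2) ∈ E) (h₃ : (Vtx.w i 2, Vtx.w i 3) ∈ E)
    (hj : ∃ j, 1 ≤ j ∧ j ≤ 3 ∧ Vtx.w i j ∈ Rinv R E) : MoverWins C R true (.z i) E := by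
  by_cases hw₁ : Vtx.w i 1 ∈ Rinv R E
  · exact .winsNow ⟨[.z i, .w i 1], hz, .inr hw₁, by simp, by simp, rfl, rfl,
      isChain_of_pathEdges_subset (by simp [h₁]), by simp, rfl⟩ hw₁
  by_cases hw₂ : Vtx.w i 2 ∈ Rinv R E
  · exact .winsNow ⟨[.z i, .w i 1, .w i 2], hz, .inr hw₂, by simp, by simp, rfl, rfl,
      isChain_of_pathEdges_subset (by simp [Set.insert_subset_iff, h₁, h₂]),
      by simp [hw, hw₁], rfl⟩ hw₂
  obtain ⟨j, hj₁, hj₃, hw₃⟩ := hj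
  obtain rfl : j = 3 := by interval_cases j <;> simp_all
  exact .winsNow ⟨[.z i, .w i 1, .w i 2, .w i 3], hz, .inr hw₃, by simp, by simp, rfl, rfl,
    isChain_of_pathEdges_subset (by simp [Set.insert_subset_iff, h₁, h₂, h₃]),
    by simp [hw, hw₁, hw₂], rfl⟩ hw₃

lemma mem_sdiff_gpath_append_xpath_iff (hn : 1 ≤ n) (σ : ℕ → Bool) (b : Bool) (d : ℕ)
    {e : Edge} (he : e.2 ∉ xpath d 1) :
    e ∈ (EG n m \ usedEdges σ (n - 1)) \ pathEdges (gpath n b ++ xpath d 1) ↔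
      e ∈ EG n m \ usedEdges (Function.update σ n b) n := by
  obtain ⟨k, rfl⟩ : ∃ k, n = k + 1 := ⟨n - 1, by omega⟩
  rw [← sdiff_usedEdges_sdiff_gpath, Nat.add_sub_cancel]
  exact and_congr_right fun _ =>
    ⟨fun h h' => h (pathEdges_subset_append _ _ h'),
      fun h h' => (mem_pathEdges_append h').elim h he⟩

lemma moverWins_after_last_move (hn : 1 ≤ n) (hwf : LitWF n m lit) {σ : ℕ → Bool} {b : Bool}
    (hF : FTrue lit m (Function.update σ n b)) (d : ℕ) {i : ℕ} (hi₁ : 1 ≤ i) (hi₂ : i ≤ m) :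
    MoverWins (Cset n m) (Rrel lit m) true (.z i)
      ((EG n m \ usedEdges σ (n - 1)) \ pathEdges (gpath n b ++ xpath d 1)) := by
  have hw {u : Vtx} {j : ℕ} (h : (u, .w i j) ∈ EG n m) :
      (u, .w i j) ∈ (EG n m \ usedEdges σ (n - 1)) \ pathEdges (gpath n b ++ xpath d 1) :=
    (mem_sdiff_gpath_append_xpath_iff hn σ b d (not_mem_xpath (by simp) d 1)).2
      ⟨h, edge_w_not_mem_usedEdges _ _ _ _ _⟩
  refine moverWins_z_of_exists_w (z_mem_Cset hi₁ hi₂) (w_not_mem_Cset i)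
    (hw (mem_EG_iff.2 ⟨hi₁, hi₂, rfl⟩)) (hw (mem_EG_iff.2 ⟨hi₁, hi₂, .inl ⟨rfl, rfl⟩⟩))
    (hw (mem_EG_iff.2 ⟨hi₁, hi₂, .inr ⟨rfl, rfl⟩⟩)) ?_
  obtain ⟨j, hj₁, hj₃, htrue⟩ := hF i hi₁ hi₂
  obtain ⟨hvar₁, hvar₂⟩ := hwf i j hi₁ hi₂ hj₁ hj₃
  refine ⟨j, hj₁, hj₃, (w_mem_Rinv_iff hi₁ hi₂ hj₁ hj₃).2 ?_⟩
  refine (mem_sdiff_gpath_append_xpath_iff hn σ b d (Lit.edge_snd_not_mem_xpath _ d 1)).2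
    ⟨Lit.edge_mem_EG hvar₁ hvar₂, ?_⟩
  simp [Lit.edge_mem_usedEdges_iff hvar₁ hvar₂, htrue]

lemma moverWins_last (hn : 2 ≤ n) (hwf : LitWF n m lit) {σ : ℕ → Bool}
    (hF : ∀ b, FTrue lit m (Function.update σ n b)) :
    MoverWins (Cset n m) (Rrel lit m) false (.g (n - 1)) (EG n m \ usedEdges σ (n - 1)) := by
  refine .loses (fun v E' ⟨p, hp⟩ => ?_) (fun v E' ⟨p, hp⟩ => ?_) <;>
    obtain ⟨b, d, rfl, rfl, hd, rfl⟩ := eq_gpath_append_xpath_of_legalMoveVia Set.sdiff_subset hn hp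
  · exact fun h => by obtain ⟨_, _, ⟨⟩⟩ := exists_eq_w_of_mem_Rinv h
  · exact moverWins_after_last_move (by omega) hwf (hF b) d (by omega) hd

lemma moverWins_g_of_qAux (hn : Even n) (hn2 : 2 ≤ n) (hwf : LitWF n m lit) {k : ℕ} (hk : k ≤ n - 1)
    (σ : ℕ → Bool) (hQ : QAux (FTrue lit m) (k + 1) (n - k) σ) :
    MoverWins (Cset n m) (Rrel lit m) (decide (Even k)) (.g k) (EG n m \ usedEdges σ k) := by
  induction hk using Nat.decreasingInduction generalizing σ with
  | self =>
    have hn' := Nat.even_iff.1 hn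
    have hodd : ¬ Even (n - 1) := Nat.even_add_one.1 (by rwa [Nat.sub_add_cancel (by omega)])
    rw [show n - (n - 1) = 0 + 1 by omega, QAux, Nat.sub_add_cancel (by omega),
      if_neg (by omega)] at hQ
    simpa [hodd] using moverWins_last hn2 hwf hQ
  | of_succ k hk ih =>
    rw [show n - k = n - (k + 1) + 1 by omega, QAux] at hQ
    rcases Nat.even_or_odd k with hev | hodd
    · rw [if_pos (by have := Nat.even_iff.1 hev; omega)] at hQ
      obtain ⟨b, hb⟩ := hQ
      have hwin := ih _ hb
      simp only [Nat.even_add_one, hev, not_true, decide_false] at hwin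
      simpa [hev] using .winsLater ⟨_, legalMoveVia_gpath σ (by omega) b⟩ hwin
    · rw [if_neg (by have := Nat.odd_iff.1 hodd; omega)] at hQ
      simp only [Nat.not_even_iff_odd.2 hodd, decide_false]
      refine .loses (fun v E' ⟨p, hp⟩ => ?_) (fun v E' ⟨p, hp⟩ => ?_) <;>
        obtain ⟨b, rfl, rfl, rfl⟩ := eq_gpath_of_legalMoveVia Set.sdiff_subset (by omega) hp
      · exact fun h => by obtain ⟨_, _, ⟨⟩⟩ := exists_eq_w_of_mem_Rinv h
      · rw [sdiff_usedEdges_sdiff_gpath]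
        simpa [Nat.even_add_one, Nat.not_even_iff_odd.2 hodd] using ih _ (hQ b)

end Strategy

theorem existsPlayer_wins_of_qbf_true_general
    (n m : ℕ) (hn : Even n) (hn2 : 2 ≤ n)
    (lit : ℕ → ℕ → Lit) (hwf : LitWF n m lit)
    (hQ : QTrue n m lit) :
    MoverWins (Cset n m) (Rrel lit m) true (Vtx.g 0) (EG n m) := by
  simpa [usedEdges_zero] using moverWins_g_of_qAux hn hn2 hwf (Nat.zero_le _) (fun _ => false) hQ

/-- If the restricted quantified Boolean formula `Q` is true, then the
∃-player (who moves first, from `s = g₀`, with initial edge set `E(G)`) has a winning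
strategy in the graph game on `(G, C, s, R)` constructed from `Q`. -/
theorem existsPlayer_wins_of_qbf_true
    (n m : ℕ) (hn : Even n) (hn2 : 2 ≤ n) (hm : 1 ≤ m)
    (lit : ℕ → ℕ → Lit) (hwf : LitWF n m lit)
    (hQ : QTrue n m lit) :
    MoverWins (Cset n m) (Rrel lit m) true (Vtx.g 0) (EG n m) :=
  existsPlayer_wins_of_qbf_true_general n m hn hn2 lit hwf hQ

end PhutballQBF
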